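/- arXiv:1712.10010 — 2 statements merged into one kernel-verified Lean document; each statement's English description precedes it below -/
import Mathlib

section
/- Let Q_k (k ≥ 2) be the tree obtained from two copies of the star K_{1,k−1} by identifying a leaf of one copy with a leaf of the other (so Q_k has 2k−1 vertices, diameter 4, with the unique degree-2 vertex adjacent to the two centers). Then cfc(Q_k) = k, and Q_k is k-cfc-critical: every proper subtree T' of Q_k satisfies cfc(T') < k. -/
/-- `c` is a conflict-free connection coloring of `G`: every pair of distinct
vertices is joined by a path on which some color appears on exactly one edge. -/
def IsCFCColoring {V : Type*} (G : SimpleGraph V) (c : Sym2 V → ℕ) : Prop :=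
  ∀ u v : V, u ≠ v → ∃ p : G.Walk u v, p.IsPath ∧
    ∃ col : ℕ, (p.edges.filter (fun e => c e = col)).length = 1

/-- The conflict-free connection number of `G`: the least `k` such that some
coloring of the edges of `G` with colors `0, …, k-1` is a conflict-free
connection coloring. -/
noncomputable def cfcNum {V : Type*} [Fintype V] (G : SimpleGraph V) : ℕ :=
  sInf {k | ∃ c : Sym2 V → ℕ, (∀ e ∈ G.edgeSet, c e < k) ∧ IsCFCColoring G c}

/-!
In a tree the path between two vertices is unique, so a conflict-free colouring gives adjacent
edges distinct colours. With only `k - 1` colours each of the centres `u`, `v` (of degree `k - 1`)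
sees every colour, so some leaf edge `xu` has the colour of `wv` and some leaf edge `vy` that of
`uw`; on the path `x u w v y` both colours then occur twice.

Conversely, a colouring that is injective on the edges at `u` and on those at `v`, and gives `uw`
a colour of its own, is conflict-free: two vertices on the same side of `uw` are joined through a
common centre, and a path crossing `uw` sees its colour once. Such colourings with `k` colours
exist, and for every vertex `z` one of them uses its top colour only on edges at `z`. Since a
conflict-free colouring of a tree restricts to one of every subtree, a subtree missing `z` then
needs at most `k - 1` colours.
-/

open SimpleGraph

namespace Finset

variable {α : Type*}

lemma exists_injOn_lt_card (s : Finset α) :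
    ∃ f : α → ℕ, Set.InjOn f s ∧ ∀ x ∈ s, f x < s.card := by
  classical
  refine ⟨fun x => if h : x ∈ s then s.equivFin ⟨x, h⟩ else 0, ?_, fun x hx => by simp [hx]⟩
  intro x hx y hy hxy
  simp only [mem_coe] at hx hy
  simp only [dif_pos hx, dif_pos hy] at hxy
  exact congrArg Subtype.val (s.equivFin.injective (Fin.ext hxy))

lemma exists_injOn_eq_of_card_erase_le [DecidableEq α] (s : Finset α) (z : α) {n : ℕ}
    (hn : (s.erase z).card ≤ n) :
    ∃ f : α → ℕ, Set.InjOn f s ∧ f z = n ∧ ∀ x ∈ s, x ≠ z → f x < (s.erase z).card := by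
  obtain ⟨f, hf, hlt⟩ := (s.erase z).exists_injOn_lt_card
  have hlt' : ∀ x ∈ s, x ≠ z → f x < (s.erase z).card := fun x hx hxz =>
    hlt x (mem_erase.2 ⟨hxz, hx⟩)
  refine ⟨Function.update f z n, fun x hx y hy hxy => ?_, by simp, fun x hx hxz => ?_⟩
  · by_cases hxz : x = z <;> by_cases hyz : y = z
    · rw [hxz, hyz]
    · simp only [hxz, hyz, Function.update_self, Function.update_of_ne, Ne, not_false_eq_true]
        at hxy
      exact absurd hxy ((hlt' y hy hyz).trans_le hn).ne'
    · simp only [hxz, hyz, Function.update_self, Function.update_of_ne, Ne, not_false_eq_true]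
        at hxy
      exact absurd hxy ((hlt' x hx hxz).trans_le hn).ne
    · simp only [hxz, hyz, Function.update_of_ne, Ne, not_false_eq_true] at hxy
      exact hf (by simp [hxz, hx]) (by simp [hyz, hy]) hxy
  · simpa [hxz] using hlt' x hx hxz

end Finset

namespace SimpleGraph

variable {V : Type*} {G : SimpleGraph V} {c : Sym2 V → ℕ}

def Walk.HasUniqueColor {a b : V} (c : Sym2 V → ℕ) (p : G.Walk a b) : Prop :=
  ∃ col : ℕ, (p.edges.filter (fun e => c e = col)).length = 1

lemma Walk.HasUniqueColor.reverse {a b : V} {p : G.Walk a b} (h : p.HasUniqueColor c) :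
    p.reverse.HasUniqueColor c := by
  obtain ⟨col, hcol⟩ := h
  exact ⟨col, by rwa [Walk.edges_reverse, List.filter_reverse, List.length_reverse]⟩

lemma Walk.IsPath.hasUniqueColor_of_mem_edges {a b : V} {p : G.Walk a b} (hp : p.IsPath)
    {e : Sym2 V} (he : e ∈ p.edges) (huniq : ∀ e' ∈ p.edges, c e' = c e → e' = e) :
    p.HasUniqueColor c := by
  classical
  refine ⟨c e, ?_⟩
  rw [← List.count_eq_one_of_mem hp.isTrail.edges_nodup he, List.count_eq_length_filter]
  congr 1
  refine List.filter_congr fun e' he' => ?_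
  rw [Bool.eq_iff_iff, decide_eq_true_iff, beq_iff_eq]
  exact ⟨huniq e' he', fun h => h ▸ rfl⟩

lemma exists_isPath_hasUniqueColor_of_adj {m a b : V}
    (hm : Set.InjOn (fun x => c s(m, x)) (G.neighborSet m))
    (ha : a = m ∨ G.Adj m a) (hb : b = m ∨ G.Adj m b) (hab : a ≠ b) :
    ∃ p : G.Walk a b, p.IsPath ∧ p.HasUniqueColor c := by
  have single : ∀ {x y}, G.Adj x y → ∃ p : G.Walk x y, p.IsPath ∧ p.HasUniqueColor c :=
    fun {x y} h => ⟨_, (Path.singleton h).2, (Path.singleton h).2.hasUniqueColor_of_mem_edges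
      (e := s(x, y)) (by simp [Path.singleton]) (by simp [Path.singleton])⟩
  rcases ha with rfl | ha
  · exact single (hb.resolve_left (Ne.symm hab))
  rcases hb with rfl | hb
  · obtain ⟨p, hp, hpc⟩ := single ha
    exact ⟨p.reverse, hp.reverse, hpc.reverse⟩
  have hp : (Walk.cons ha.symm (.cons hb .nil)).IsPath := by simp [ha.ne', hb.ne, hab]
  refine ⟨_, hp, hp.hasUniqueColor_of_mem_edges (e := s(m, b)) (by simp) ?_⟩
  simp only [Walk.edges_cons, Walk.edges_nil, List.mem_cons, List.not_mem_nil,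
    or_false, forall_eq_or_imp, forall_eq, imp_self, and_true]
  intro h
  exact absurd (hm ha hb (by simpa [Sym2.eq_swap] using h)) hab

lemma exists_isPath_hasUniqueColor_of_cut (hG : G.Connected) {A : Set V} {e : Sym2 V}
    (hcut : ∀ x ∈ A, ∀ y ∉ A, G.Adj x y → s(x, y) = e)
    (he : ∀ e' ∈ G.edgeSet, c e' = c e → e' = e) {a b : V} (ha : a ∈ A) (hb : b ∉ A) :
    ∃ p : G.Walk a b, p.IsPath ∧ p.HasUniqueColor c := by
  classical
  let p := (hG.preconnected a b).some.toPath
  obtain ⟨d, hd, hdA, hdA'⟩ := p.1.exists_boundary_dart A ha hb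
  have hde : d.edge = e := hcut _ hdA _ hdA' d.adj
  refine ⟨p.1, p.2, p.2.hasUniqueColor_of_mem_edges (e := e) ?_
    fun e' he' => he e' (p.1.edges_subset_edgeSet he')⟩
  rw [← hde, Walk.edges_eq_map_darts]
  exact List.mem_map_of_mem hd

end SimpleGraph

section

variable {V : Type*} {G : SimpleGraph V} {c : Sym2 V → ℕ}

theorem isCFCColoring_of_cut (hG : G.Connected) (A : Set V) {m₁ m₂ : V} {e : Sym2 V}
    (hA : ∀ x ∈ A, x = m₁ ∨ G.Adj m₁ x) (hAc : ∀ x ∉ A, x = m₂ ∨ G.Adj m₂ x)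
    (hcut : ∀ x ∈ A, ∀ y ∉ A, G.Adj x y → s(x, y) = e)
    (h₁ : Set.InjOn (fun x => c s(m₁, x)) (G.neighborSet m₁))
    (h₂ : Set.InjOn (fun x => c s(m₂, x)) (G.neighborSet m₂))
    (he : ∀ e' ∈ G.edgeSet, c e' = c e → e' = e) : IsCFCColoring G c := by
  intro a b hab
  by_cases ha : a ∈ A <;> by_cases hb : b ∈ A
  · exact exists_isPath_hasUniqueColor_of_adj h₁ (hA a ha) (hA b hb) hab
  · exact exists_isPath_hasUniqueColor_of_cut hG hcut he ha hb
  · obtain ⟨p, hp, hpc⟩ := exists_isPath_hasUniqueColor_of_cut hG hcut he hb ha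
    exact ⟨p.reverse, hp.reverse, hpc.reverse⟩
  · exact exists_isPath_hasUniqueColor_of_adj h₂ (hAc a ha) (hAc b hb) hab

lemma IsCFCColoring.hasUniqueColor (hc : IsCFCColoring G c) (hG : G.IsAcyclic) {a b : V}
    {p : G.Walk a b} (hp : p.IsPath) (hab : a ≠ b) : p.HasUniqueColor c := by
  obtain ⟨q, hq, hqc⟩ := hc a b hab
  rwa [show p = q from congrArg Subtype.val ((hG.subsingleton_path a b).elim ⟨p, hp⟩ ⟨q, hq⟩)]

lemma IsCFCColoring.injOn_neighborSet (hc : IsCFCColoring G c) (hG : G.IsAcyclic) (m : V) :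
    Set.InjOn (fun x => c s(m, x)) (G.neighborSet m) := by
  intro x (hx : G.Adj m x) y (hy : G.Adj m y) (hxy : c s(m, x) = c s(m, y))
  by_contra hne
  have hp : (Walk.cons hx.symm (.cons hy .nil)).IsPath := by simp [hne, hx.ne', hy.ne]
  obtain ⟨col, hcol⟩ := hc.hasUniqueColor hG hp hne
  rw [Sym2.eq_swap] at hxy
  by_cases h : c s(m, y) = col <;> simp [List.filter, hxy, h] at hcol

lemma IsCFCColoring.exists_adj_color_eq [Fintype V] [DecidableRel G.Adj]
    (hc : IsCFCColoring G c) (hG : G.IsAcyclic) {m : V} {n : ℕ} (hdeg : n ≤ G.degree m)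
    (hlt : ∀ e ∈ G.edgeSet, c e < n) {j : ℕ} (hj : j < n) : ∃ x, G.Adj m x ∧ c s(m, x) = j := by
  obtain ⟨x, hx, hxj⟩ := Finset.surj_on_of_inj_on_of_card_le (s := G.neighborFinset m)
    (t := Finset.range n) (fun x _ => c s(m, x))
    (fun x hx => Finset.mem_range.2 (hlt _ ((mem_neighborFinset G m x).1 hx)))
    (fun x y hx hy => hc.injOn_neighborSet hG m (by simpa using hx) (by simpa using hy))
    (by simpa using hdeg) j (Finset.mem_range.2 hj)
  exact ⟨x, (mem_neighborFinset G m x).1 hx, hxj.symm⟩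

theorem IsCFCColoring.exists_le_color [Fintype V] [DecidableRel G.Adj]
    (hc : IsCFCColoring G c) (hG : G.IsAcyclic) {u v w : V} (hu : G.Adj u w) (hv : G.Adj v w)
    (huv : u ≠ v) {n : ℕ} (hdu : n ≤ G.degree u) (hdv : n ≤ G.degree v) :
    ∃ e ∈ G.edgeSet, n ≤ c e := by
  by_contra! hlt
  have twin : ∀ {a b}, G.Adj a w → G.Adj b w → a ≠ b → n ≤ G.degree a →
      ∃ x, G.Adj a x ∧ x ≠ w ∧ x ≠ b ∧ c s(a, x) = c s(b, w) := by
    intro a b ha hb hab hdeg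
    obtain ⟨x, hax, hx⟩ := hc.exists_adj_color_eq hG hdeg hlt (hlt s(b, w) hb)
    refine ⟨x, hax, ?_, ?_, hx⟩
    · intro hxw
      rw [hxw] at hx
      exact hab (hc.injOn_neighborSet hG w ha.symm hb.symm (by simpa [Sym2.eq_swap] using hx))
    · intro hxb
      rw [hxb] at hax hx
      exact ha.ne (hc.injOn_neighborSet hG b hax.symm hb (by simpa [Sym2.eq_swap] using hx))
  obtain ⟨x, hux, hxw, hxv, hx⟩ := twin hu hv huv hdu
  obtain ⟨y, hvy, hyw, hyu, hy⟩ := twin hv hu huv.symm hdv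
  have hxy : x ≠ y := by
    rintro rfl
    have h₁ : (Walk.cons hux (.cons hvy.symm .nil)).IsPath := by simp [hux.ne, hxv, huv]
    have h₂ : (Walk.cons hu (.cons hv.symm .nil)).IsPath := by simp [hu.ne, hv.ne', huv]
    have := congrArg (fun p : G.Path u v => p.1.support)
      ((hG.subsingleton_path u v).elim ⟨_, h₁⟩ ⟨_, h₂⟩)
    simp only [Walk.support_cons, Walk.support_nil, List.cons.injEq] at this
    exact hxw this.2.1
  have hp : (Walk.cons hux.symm (.cons hu (.cons hv.symm (.cons hvy .nil)))).IsPath := by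
    simp [hux.ne', hxw, hxv, hxy, hu.ne, huv, hyu.symm, hv.ne', hyw.symm, hvy.ne]
  obtain ⟨col, hcol⟩ := hc.hasUniqueColor hG hp hxy
  rw [Sym2.eq_swap] at hx
  by_cases h₁ : c s(u, w) = col <;> by_cases h₂ : c s(v, w) = col <;>
    simp [List.filter, Sym2.eq_swap (a := w), hx, hy, h₁, h₂] at hcol

lemma cfcNum_le [Fintype V] {k : ℕ} (hc : IsCFCColoring G c) (hk : ∀ e ∈ G.edgeSet, c e < k) :
    cfcNum G ≤ k :=
  Nat.sInf_le ⟨c, hk, hc⟩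

lemma lt_cfcNum [Fintype V] {k n : ℕ} (hc : IsCFCColoring G c) (hk : ∀ e ∈ G.edgeSet, c e < k)
    (h : ∀ c', IsCFCColoring G c' → ∃ e ∈ G.edgeSet, n ≤ c' e) : n < cfcNum G := by
  obtain ⟨c', hlt, hc'⟩ : cfcNum G ∈ _ := Nat.sInf_mem ⟨k, c, hk, hc⟩
  obtain ⟨e, he, hne⟩ := h c' hc'
  exact hne.trans_lt (hlt e he)

lemma IsCFCColoring.induce (hc : IsCFCColoring G c) (hG : G.IsAcyclic) {s : Set V}
    (hs : (G.induce s).Connected) :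
    IsCFCColoring (G.induce s) (fun e => c (e.map Subtype.val)) := by
  classical
  intro a b hab
  let p := (hs.preconnected a b).some.toPath
  let φ := Embedding.induce (G := G) s
  refine ⟨p.1, p.2, ?_⟩
  obtain ⟨col, hcol⟩ := hc.hasUniqueColor hG (p.2.map (f := φ.toHom) φ.injective)
    (φ.injective.ne hab)
  refine ⟨col, ?_⟩
  rwa [Walk.edges_map, List.filter_map, List.length_map] at hcol

theorem cfcNum_induce_le (hc : IsCFCColoring G c) (hG : G.IsAcyclic) {s : Set V} [Fintype s]
    (hs : (G.induce s).Connected) {z : V} (hz : z ∉ s) {n : ℕ}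
    (hn : ∀ e ∈ G.edgeSet, z ∉ e → c e < n) : cfcNum (G.induce s) ≤ n := by
  refine cfcNum_le (hc.induce hG hs) fun e he => ?_
  induction e using Sym2.ind with
  | _ a b =>
    refine hn _ (by simpa using he) ?_
    simp only [Sym2.map_mk, Sym2.mem_iff, not_or]
    exact ⟨fun h => hz (h ▸ a.2), fun h => hz (h ▸ b.2)⟩

end

namespace SimpleGraph

variable {V : Type*} {G : SimpleGraph V} {c : Sym2 V → ℕ} {u v w : V}

structure IsSubdividedDoubleStar (G : SimpleGraph V) (u v w : V) : Prop where
  ne : u ≠ v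
  adj_left : G.Adj u w
  adj_right : G.Adj v w
  not_adj : ¬ G.Adj u v
  eq_of_adj_mid {x : V} : G.Adj w x → x = u ∨ x = v
  isLeaf (x : V) : x ≠ u → x ≠ v → x ≠ w →
    (∀ y, G.Adj x y ↔ y = u) ∨ (∀ y, G.Adj x y ↔ y = v)

theorem IsTree.isSubdividedDoubleStar [Fintype V] [DecidableRel G.Adj] (hG : G.IsTree)
    (huv : u ≠ v) (hu : G.Adj u w) (hv : G.Adj v w) (hw : G.degree w = 2)
    (hleaf : ∀ x, x ≠ u → x ≠ v → x ≠ w → G.degree x = 1) : G.IsSubdividedDoubleStar u v w := by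
  classical
  have hNw : G.neighborFinset w = {u, v} := by
    refine (Finset.eq_of_subset_of_card_le ?_ ?_).symm
    · simp [Finset.insert_subset_iff, hu.symm, hv.symm]
    · rw [card_neighborFinset_eq_degree, hw, Finset.card_pair huv]
  have mid : ∀ {x}, G.Adj w x → x = u ∨ x = v := fun {x} h => by
    simpa [hNw] using (G.mem_neighborFinset w x).2 h
  refine ⟨huv, hu, hv, fun h => hG.isAcyclic.cliqueFree le_rfl {u, v, w}
    (is3Clique_triple_iff.2 ⟨h, hu, hv⟩), mid, fun x hxu hxv hxw => ?_⟩
  obtain ⟨y, hxy, hy⟩ := degree_eq_one_iff_existsUnique_adj.1 (hleaf x hxu hxv hxw)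
  have hyw : y ≠ w := by
    rintro rfl
    exact (mid hxy.symm).elim hxu hxv
  by_cases hyu : y = u
  · exact .inl fun z => ⟨fun h => (hy z h).trans hyu, fun h => h ▸ hyu ▸ hxy⟩
  by_cases hyv : y = v
  · exact .inr fun z => ⟨fun h => (hy z h).trans hyv, fun h => h ▸ hyv ▸ hxy⟩
  -- otherwise the leaves `x` and `y` would form a component of their own
  obtain ⟨y', -, hy'⟩ := degree_eq_one_iff_existsUnique_adj.1 (hleaf y hyu hyv hyw)
  obtain ⟨d, -, hd, hd'⟩ := (hG.connected.preconnected x u).some.exists_boundary_dart {x, y}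
    (by simp) (by simp [Ne.symm hxu, Ne.symm hyu])
  rcases hd with h | h
  · exact absurd (.inr (hy _ (h ▸ d.adj))) hd'
  · exact absurd (.inl ((hy' _ (h ▸ d.adj)).trans (hy' x hxy.symm).symm)) hd'

namespace IsSubdividedDoubleStar

theorem symm (hQ : G.IsSubdividedDoubleStar u v w) : G.IsSubdividedDoubleStar v u w :=
  ⟨hQ.ne.symm, hQ.adj_right, hQ.adj_left, fun h => hQ.not_adj h.symm,
    fun h => (hQ.eq_of_adj_mid h).symm, fun x hv hu hw => (hQ.isLeaf x hu hv hw).symm⟩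

theorem eq_left_of_adj (hQ : G.IsSubdividedDoubleStar u v w) {x y : V} (hux : G.Adj u x)
    (hxw : x ≠ w) (hxy : G.Adj x y) : y = u := by
  have hxv : x ≠ v := fun h => hQ.not_adj (h ▸ hux)
  rcases hQ.isLeaf x hux.ne' hxv hxw with h | h
  · exact (h y).1 hxy
  · exact absurd ((h u).1 hux.symm) hQ.ne

theorem eq_mid_of_adj_of_adj (hQ : G.IsSubdividedDoubleStar u v w) {x : V} (hux : G.Adj u x)
    (hvx : G.Adj v x) : x = w := by
  by_contra hxw
  exact hQ.ne (hQ.eq_left_of_adj hux hxw hvx.symm).symm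

theorem adj_or_adj (hQ : G.IsSubdividedDoubleStar u v w) {x : V} (hxu : x ≠ u) (hxv : x ≠ v) :
    G.Adj u x ∨ G.Adj v x := by
  by_cases hxw : x = w
  · exact .inl (hxw ▸ hQ.adj_left)
  rcases hQ.isLeaf x hxu hxv hxw with h | h
  · exact .inl ((h u).2 rfl).symm
  · exact .inr ((h v).2 rfl).symm

theorem forall_mem_edgeSet (hQ : G.IsSubdividedDoubleStar u v w) {P : Sym2 V → Prop}
    (hmid : P s(u, w)) (hleft : ∀ x, G.Adj u x → x ≠ w → P s(u, x))
    (hright : ∀ y, G.Adj v y → P s(v, y)) : ∀ e ∈ G.edgeSet, P e := by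
  intro e he
  induction e using Sym2.ind with
  | _ a b =>
    have hab : G.Adj a b := he
    by_cases hau : a = u
    · subst hau
      by_cases hbw : b = w
      · exact hbw ▸ hmid
      · exact hleft b hab hbw
    by_cases hav : a = v
    · exact hav ▸ hright b (hav ▸ hab)
    by_cases haw : a = w
    · subst haw
      rcases hQ.eq_of_adj_mid hab with rfl | rfl
      · exact Sym2.eq_swap ▸ hmid
      · exact Sym2.eq_swap ▸ hright _ hQ.adj_right
    rcases hQ.adj_or_adj hau hav with h | h
    · rw [hQ.eq_left_of_adj h haw hab, Sym2.eq_swap]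
      exact hleft a h haw
    · rw [hQ.symm.eq_left_of_adj h haw hab, Sym2.eq_swap]
      exact hright a h

theorem isCFCColoring (hQ : G.IsSubdividedDoubleStar u v w) (hG : G.Connected)
    (hu : Set.InjOn (fun x => c s(u, x)) (G.neighborSet u))
    (hv : Set.InjOn (fun x => c s(v, x)) (G.neighborSet v))
    (huw : ∀ e ∈ G.edgeSet, c e = c s(u, w) → e = s(u, w)) : IsCFCColoring G c := by
  refine isCFCColoring_of_cut hG {x | x = u ∨ G.Adj u x ∧ x ≠ w} ?_ ?_ ?_ hu hv huw
  · rintro x (hx | ⟨hx, -⟩)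
    exacts [.inl hx, .inr hx]
  · intro x hx
    simp only [Set.mem_ofPred_eq, not_or, not_and_not_right] at hx
    by_cases hxv : x = v
    · exact .inl hxv
    rcases hQ.adj_or_adj hx.1 hxv with h | h
    · exact .inr (hx.2 h ▸ hQ.adj_right)
    · exact .inr h
  · rintro x (rfl | ⟨hux, hxw⟩) y hy hxy
    · simp only [Set.mem_ofPred_eq, not_or, not_and_not_right] at hy
      rw [hy.2 hxy]
    · exact absurd (.inl (hQ.eq_left_of_adj hux hxw hxy)) hy

theorem exists_coloring (hQ : G.IsSubdividedDoubleStar u v w) (t : ℕ) (α β : V → ℕ) :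
    ∃ c : Sym2 V → ℕ, c s(u, w) = t ∧ (∀ x, G.Adj u x → x ≠ w → c s(u, x) = α x) ∧
      ∀ y, G.Adj v y → c s(v, y) = β y := by
  classical
  -- every edge other than `uw` has exactly one endpoint outside `{u, v}`
  let g : V → ℕ := fun x => if x = u ∨ x = v then 0 else if G.Adj u x ∧ x ≠ w then α x else β x
  refine ⟨fun e => if e = s(u, w) then t else
    Sym2.lift ⟨fun a b => g a + g b, fun a b => add_comm _ _⟩ e, by simp, ?_, ?_⟩
  · intro x hux hxw
    have hxv : x ≠ v := fun h => hQ.not_adj (h ▸ hux)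
    simp [g, hxw, hux, hux.ne', hxv]
  · intro y hvy
    have hyu : y ≠ u := fun h => hQ.not_adj (h ▸ hvy).symm
    have hy : ¬ (G.Adj u y ∧ y ≠ w) := fun h => h.2 (hQ.eq_mid_of_adj_of_adj h.1 hvy)
    simp [g, hQ.ne.symm, hQ.adj_right.ne, hvy.ne', hyu, hy]

theorem exists_isCFCColoring (hQ : G.IsSubdividedDoubleStar u v w) (hG : G.Connected)
    (t : ℕ) (α β : V → ℕ) (hα : Set.InjOn α {x | G.Adj u x ∧ x ≠ w})
    (hβ : Set.InjOn β (G.neighborSet v)) (htα : ∀ x, G.Adj u x → x ≠ w → α x ≠ t)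
    (htβ : ∀ y, G.Adj v y → β y ≠ t) :
    ∃ c, IsCFCColoring G c ∧ c s(u, w) = t ∧ (∀ x, G.Adj u x → x ≠ w → c s(u, x) = α x) ∧
      ∀ y, G.Adj v y → c s(v, y) = β y := by
  obtain ⟨c, hmid, hl, hr⟩ := hQ.exists_coloring t α β
  refine ⟨c, hQ.isCFCColoring hG ?_ ?_ ?_, hmid, hl, hr⟩
  · intro x (hx : G.Adj u x) y (hy : G.Adj u y) (hxy : c s(u, x) = c s(u, y))
    by_cases hxw : x = w <;> by_cases hyw : y = w
    · rw [hxw, hyw]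
    · rw [hxw, hmid, hl y hy hyw] at hxy
      exact absurd hxy.symm (htα y hy hyw)
    · rw [hyw, hmid, hl x hx hxw] at hxy
      exact absurd hxy (htα x hx hxw)
    · rw [hl x hx hxw, hl y hy hyw] at hxy
      exact hα ⟨hx, hxw⟩ ⟨hy, hyw⟩ hxy
  · intro x (hx : G.Adj v x) y (hy : G.Adj v y) (hxy : c s(v, x) = c s(v, y))
    rw [hr x hx, hr y hy] at hxy
    exact hβ hx hy hxy
  · refine hQ.forall_mem_edgeSet (fun _ => rfl) (fun x hx hxw h => ?_) (fun y hy h => ?_)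
    · rw [hl x hx hxw, hmid] at h
      exact absurd h (htα x hx hxw)
    · rw [hr y hy, hmid] at h
      exact absurd h (htβ y hy)

variable [Fintype V] [DecidableRel G.Adj]

theorem exists_injOn_lt_degree_pred (hQ : G.IsSubdividedDoubleStar u v w) :
    ∃ α : V → ℕ, Set.InjOn α {x | G.Adj u x ∧ x ≠ w} ∧
      ∀ x, G.Adj u x → x ≠ w → α x < G.degree u - 1 := by
  classical
  obtain ⟨α, hα, hlt⟩ := ((G.neighborFinset u).erase w).exists_injOn_lt_card
  rw [Finset.card_erase_of_mem (by simpa using hQ.adj_left), card_neighborFinset_eq_degree]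
    at hlt
  exact ⟨α, fun x hx y hy => hα (by simpa using hx) (by simpa using hy),
    fun x hx hxw => hlt x (by simp [hx, hxw])⟩

theorem exists_isCFCColoring_le (hQ : G.IsSubdividedDoubleStar u v w) (hG : G.Connected)
    {m : ℕ} (hu : G.degree u ≤ m) (hv : G.degree v ≤ m) :
    ∃ c, IsCFCColoring G c ∧ (∀ e ∈ G.edgeSet, c e ≤ m) ∧ ∀ e ∈ G.edgeSet, u ∉ e → c e < m := by
  obtain ⟨α, hα, hαlt⟩ := hQ.exists_injOn_lt_degree_pred
  obtain ⟨β, hβ, hβlt⟩ := (G.neighborFinset v).exists_injOn_lt_card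
  have hα' : ∀ x, G.Adj u x → x ≠ w → α x < m := fun x hx hxw => by
    have := hαlt x hx hxw
    omega
  have hβ' : ∀ y, G.Adj v y → β y < m := fun y hy =>
    (hβlt y (by simpa using hy)).trans_le (by simpa using hv)
  obtain ⟨c, hc, hmid, hl, hr⟩ := hQ.exists_isCFCColoring hG m α β hα
    (fun x hx y hy => hβ (by simpa using hx) (by simpa using hy))
    (fun x hx hxw => (hα' x hx hxw).ne) (fun y hy => (hβ' y hy).ne)
  refine ⟨c, hc, hQ.forall_mem_edgeSet ?_ ?_ ?_, hQ.forall_mem_edgeSet ?_ ?_ ?_⟩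
  · exact hmid.le
  · exact fun x hx hxw => hl x hx hxw ▸ (hα' x hx hxw).le
  · exact fun y hy => hr y hy ▸ (hβ' y hy).le
  · simp
  · simp
  · exact fun y hy _ => hr y hy ▸ hβ' y hy

theorem exists_isCFCColoring_lt_of_adj (hQ : G.IsSubdividedDoubleStar u v w) (hG : G.Connected)
    {m : ℕ} (hu : G.degree u ≤ m) (hv : G.degree v ≤ m) {z : V} (hz : G.Adj v z) :
    ∃ c, IsCFCColoring G c ∧ ∀ e ∈ G.edgeSet, z ∉ e → c e < m := by
  classical
  have hcard : ((G.neighborFinset v).erase z).card = G.degree v - 1 := by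
    rw [Finset.card_erase_of_mem (by simpa using hz), card_neighborFinset_eq_degree]
  have hm : 1 ≤ m := ((G.degree_pos_iff_exists_adj v).2 ⟨z, hz⟩).trans_le hv
  obtain ⟨α, hα, hαlt⟩ := hQ.exists_injOn_lt_degree_pred
  obtain ⟨β, hβ, hβz, hβlt⟩ :=
    (G.neighborFinset v).exists_injOn_eq_of_card_erase_le z (n := m) (by omega)
  -- `vz` alone gets the top colour `m`, and `uw` alone the colour `m - 1`
  obtain ⟨c, hc, hmid, hl, hr⟩ := hQ.exists_isCFCColoring hG (m - 1) α β hα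
    (fun x hx y hy => hβ (by simpa using hx) (by simpa using hy))
    (fun x hx hxw => by have := hαlt x hx hxw; omega)
    (fun y hy => by
      by_cases hyz : y = z
      · rw [hyz, hβz]
        omega
      · have := hβlt y (by simpa using hy) hyz
        omega)
  refine ⟨c, hc, hQ.forall_mem_edgeSet ?_ ?_ ?_⟩
  · intro _
    omega
  · intro x hx hxw _
    have := hαlt x hx hxw
    rw [hl x hx hxw]
    omega
  · intro y hy hzy
    rw [hr y hy]
    have := hβlt y (by simpa using hy) fun h => hzy (h ▸ Sym2.mem_mk_right _ _)
    omega

theorem exists_isCFCColoring_lt (hQ : G.IsSubdividedDoubleStar u v w) (hG : G.Connected)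
    {m : ℕ} (hu : G.degree u ≤ m) (hv : G.degree v ≤ m) (z : V) :
    ∃ c, IsCFCColoring G c ∧ ∀ e ∈ G.edgeSet, z ∉ e → c e < m := by
  by_cases hzu : z = u
  · obtain ⟨c, hc, -, hlt⟩ := hQ.exists_isCFCColoring_le hG hu hv
    exact ⟨c, hc, hzu ▸ hlt⟩
  by_cases hzv : z = v
  · obtain ⟨c, hc, -, hlt⟩ := hQ.symm.exists_isCFCColoring_le hG hv hu
    exact ⟨c, hc, hzv ▸ hlt⟩
  rcases hQ.adj_or_adj hzu hzv with h | h
  · exact hQ.symm.exists_isCFCColoring_lt_of_adj hG hv hu h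
  · exact hQ.exists_isCFCColoring_lt_of_adj hG hu hv h

end IsSubdividedDoubleStar

end SimpleGraph

theorem cfc_Qk_general {V : Type*} [Fintype V] (G : SimpleGraph V)
    [DecidableRel G.Adj] (hG : G.IsTree) (k : ℕ) (hk : 2 ≤ k)
    (u v w : V) (huv : u ≠ v) (hu : G.Adj u w) (hv : G.Adj v w)
    (hdu : G.degree u = k - 1) (hdv : G.degree v = k - 1) (hdw : G.degree w = 2)
    (hleaf : ∀ x : V, x ≠ u → x ≠ v → x ≠ w → G.degree x = 1) :
    cfcNum G = k ∧
    ∀ S : Finset V, S.Nonempty → S ≠ Finset.univ →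
      (G.induce (S : Set V)).Connected → cfcNum (G.induce (S : Set V)) < k := by
  have hQ := hG.isSubdividedDoubleStar huv hu hv hdw hleaf
  obtain ⟨c, hc, hle, -⟩ := hQ.exists_isCFCColoring_le hG.connected hdu.le hdv.le
  have hlt : ∀ e ∈ G.edgeSet, c e < k := fun e he => by
    have := hle e he
    omega
  refine ⟨le_antisymm (cfcNum_le hc hlt) ?_, fun S _ hS hconn => ?_⟩
  · have := lt_cfcNum hc hlt fun c' hc' =>
      hc'.exists_le_color hG.isAcyclic hu hv huv hdu.ge hdv.ge
    omega
  · obtain ⟨z, hz⟩ : ∃ z, z ∉ S := by simpa [Finset.eq_univ_iff_forall] using hS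
    obtain ⟨c, hc, hlt⟩ := hQ.exists_isCFCColoring_lt hG.connected hdu.le hdv.le z
    have := cfcNum_induce_le hc hG.isAcyclic hconn (by simpa using hz) hlt
    omega

/-- Let `Q_k` (`k ≥ 2`) be the tree on `2k - 1` vertices obtained from two
copies of the star `K_{1,k-1}` by identifying a leaf of one with a leaf of the
other: it has two vertices `u, v` of degree `k - 1`, a vertex `w` of degree
`2` adjacent to both, and all remaining vertices are leaves.  Then
`cfc(Q_k) = k` and `Q_k` is `k`-cfc-critical: every proper subtree has
conflict-free connection number less than `k`. -/
theorem cfc_Qk {V : Type*} [Fintype V] [DecidableEq V] (G : SimpleGraph V)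
    [DecidableRel G.Adj] (hG : G.IsTree) (k : ℕ) (hk : 2 ≤ k)
    (hcard : Fintype.card V = 2 * k - 1)
    (u v w : V) (huv : u ≠ v) (hu : G.Adj u w) (hv : G.Adj v w)
    (hdu : G.degree u = k - 1) (hdv : G.degree v = k - 1) (hdw : G.degree w = 2)
    (hleaf : ∀ x : V, x ≠ u → x ≠ v → x ≠ w → G.degree x = 1) :
    cfcNum G = k ∧
    ∀ S : Finset V, S.Nonempty → S ≠ Finset.univ →
      (G.induce (S : Set V)).Connected → cfcNum (G.induce (S : Set V)) < k :=
  cfc_Qk_general G hG k hk u v w huv hu hv hdu hdv hdw hleaf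
end

section
/- Let R_k (k ≥ 2) be the tree obtained from the star K_{1,k−1} and the path P_{2^{k−2}+1} by identifying a leaf of the star with an endpoint of the path. Then cfc(R_k) = k. -/
/-- The tree `R_k` obtained from the star `K_{1,k-1}` and the path
`P_{2^(k-2)+1}` by identifying a leaf of the star with an endpoint of the
path.  Vertex `0` is the star center, vertices `1, …, k-1` are its leaves,
and vertices `k-1, k, …, k-2+2^(k-2)` form the path. -/
def Rtree (k : ℕ) : SimpleGraph (Fin (k + 2 ^ (k - 2))) :=
  SimpleGraph.fromRel (fun x y =>
    ((x : ℕ) = 0 ∧ 1 ≤ (y : ℕ) ∧ (y : ℕ) ≤ k - 1) ∨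
    (k - 1 ≤ (x : ℕ) ∧ (y : ℕ) = (x : ℕ) + 1))



/-- every nonempty contiguous interval has an element of count 1 -/
def IntvUniq (S : List ℕ) : Prop :=
  ∀ l₁ m l₂ : List ℕ, S = l₁ ++ m ++ l₂ → m ≠ [] → ∃ x, m.count x = 1

lemma intvUniq_of_append_left {P Q : List ℕ} (h : IntvUniq (P ++ Q)) : IntvUniq P := by
  intro l₁ m l₂ hm hne
  exact h l₁ m (l₂ ++ Q) (by rw [hm]; simp) hne

lemma intvUniq_of_append_right {P Q : List ℕ} (h : IntvUniq (P ++ Q)) : IntvUniq Q := by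
  intro l₁ m l₂ hm hne
  exact h (P ++ l₁) m l₂ (by rw [hm]; simp) hne

lemma cf_length_le : ∀ (n : ℕ) (A : Finset ℕ) (S : List ℕ), A.card ≤ n →
    (∀ x ∈ S, x ∈ A) → IntvUniq S → S.length ≤ 2 ^ A.card - 1 := by
  intro n
  induction n with
  | zero =>
    intro A S hA hmem hint
    match S with
    | [] => simp
    | a :: S' =>
      exfalso
      have h1 : a ∈ A := hmem a (by simp)
      have : 0 < A.card := Finset.card_pos.mpr ⟨a, h1⟩
      omega
  | succ n ih =>
    intro A S hA hmem hint
    match S with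
    | [] => simp
    | a :: S' =>
      obtain ⟨x, hx⟩ := hint [] (a :: S') [] (by simp) (by simp)
      have hxS : x ∈ a :: S' := by
        by_contra h
        rw [List.count_eq_zero_of_not_mem h] at hx; omega
      obtain ⟨X, Y, hXY⟩ := List.append_of_mem hxS
      have hcount : (a :: S').count x = X.count x + (1 + Y.count x) := by
        rw [hXY]; simp [List.count_append, List.count_cons]; omega
      rw [hx] at hcount
      have hXx : x ∉ X := List.count_eq_zero.mp (by omega)
      have hYx : x ∉ Y := List.count_eq_zero.mp (by omega)
      have hxA : x ∈ A := hmem x hxS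
      have hApos : 0 < A.card := Finset.card_pos.mpr ⟨x, hxA⟩
      have hcard : (A.erase x).card = A.card - 1 := Finset.card_erase_of_mem hxA
      have hX : X.length ≤ 2 ^ (A.card - 1) - 1 := by
        rw [← hcard]
        refine ih (A.erase x) X (by omega) ?_ ?_
        · intro y hy
          exact Finset.mem_erase.mpr ⟨fun h => hXx (h ▸ hy), hmem y (by rw [hXY]; simp [hy])⟩
        · exact intvUniq_of_append_left (hXY ▸ hint)
      have hY : Y.length ≤ 2 ^ (A.card - 1) - 1 := by
        rw [← hcard]
        refine ih (A.erase x) Y (by omega) ?_ ?_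
        · intro y hy
          exact Finset.mem_erase.mpr ⟨fun h => hYx (h ▸ hy), hmem y (by rw [hXY]; simp [hy])⟩
        · have h1 : IntvUniq (x :: Y) := intvUniq_of_append_right (hXY ▸ hint)
          exact intvUniq_of_append_right (P := [x]) h1
      have hlen : (a :: S').length = X.length + 1 + Y.length := by rw [hXY]; simp; omega
      obtain ⟨c, hc⟩ : ∃ c, A.card = c + 1 := ⟨A.card - 1, by omega⟩
      rw [hc] at hX hY ⊢
      simp only [Nat.add_sub_cancel] at hX hY
      have h2 : 2 ^ (c + 1) = 2 ^ c + 2 ^ c := by rw [pow_succ]; omega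
      have h3 : 0 < 2 ^ c := pow_pos (by norm_num) c
      omega

/-- every prefix containing `d` has two distinct uniques different from `d` -/
def PrefTwo (d : ℕ) (S : List ℕ) : Prop :=
  ∀ P Q : List ℕ, S = P ++ Q → d ∈ P →
    ∃ x y, x ≠ y ∧ x ≠ d ∧ y ≠ d ∧ P.count x = 1 ∧ P.count y = 1

lemma prefTwo_of_append {d : ℕ} {P Q : List ℕ} (h : PrefTwo d (P ++ Q)) : PrefTwo d P := by
  intro P' Q' hP hd
  exact h P' (Q' ++ Q) (by rw [hP]; simp) hd

lemma cfd_length_le : ∀ (n : ℕ) (A : Finset ℕ) (S : List ℕ) (d : ℕ), A.card ≤ n → d ∈ A →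
    (∀ x ∈ S, x ∈ A) → IntvUniq S → PrefTwo d S → S.length ≤ 2 ^ (A.card - 1) - 1 := by
  intro n
  induction n with
  | zero =>
    intro A S d hA hdA hmem hint hpref
    exact absurd (Finset.card_pos.mpr ⟨d, hdA⟩) (by omega)
  | succ n ih =>
    intro A S d hA hdA hmem hint hpref
    by_cases hdS : d ∈ S
    · obtain ⟨x, y, hxy, hxd, hyd, hcx, hcy⟩ := hpref S [] (by simp) hdS
      have hxS : x ∈ S := by
        by_contra h; rw [List.count_eq_zero_of_not_mem h] at hcx; omega
      obtain ⟨X, Y, hXY⟩ := List.append_of_mem hxS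
      have hcountx : X.count x + (Y.count x + 1) = 1 := by
        rw [hXY] at hcx
        simpa [List.count_append, List.count_cons] using hcx
      have hXx : x ∉ X := List.count_eq_zero.mp (by omega)
      have hYx : x ∉ Y := List.count_eq_zero.mp (by omega)
      have hcounty : X.count y + Y.count y = 1 := by
        rw [hXY] at hcy
        simpa [List.count_append, List.count_cons, hxy, Ne.symm hxy] using hcy
      have hxA : x ∈ A := hmem x hxS
      have hyA : y ∈ A := hmem y (by
        by_contra h; rw [List.count_eq_zero_of_not_mem h] at hcy; omega)
      have hcard2 : 2 ≤ A.card := by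
        have := Finset.one_lt_card.mpr ⟨x, hxA, y, hyA, hxy⟩; omega
      have hcardy : (A.erase y).card = A.card - 1 := Finset.card_erase_of_mem hyA
      have hcardx : (A.erase x).card = A.card - 1 := Finset.card_erase_of_mem hxA
      have hcardxy : ((A.erase y).erase x).card = A.card - 2 := by
        rw [Finset.card_erase_of_mem (Finset.mem_erase.mpr ⟨hxy, hxA⟩), hcardy]; omega
      have hcardyx : ((A.erase x).erase y).card = A.card - 2 := by
        rw [Finset.card_erase_of_mem (Finset.mem_erase.mpr ⟨Ne.symm hxy, hyA⟩), hcardx]; omega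
      obtain ⟨c, hc⟩ : ∃ c, A.card = c + 2 := ⟨A.card - 2, by omega⟩
      have hpow : 2 ^ (c + 1) = 2 ^ c + 2 ^ c := by rw [pow_succ]; omega
      have hpos : 0 < 2 ^ c := pow_pos (by norm_num) c
      by_cases hyY : y ∈ Y
      · -- y occurs after x : split Y at y
        obtain ⟨Y₁, Y₂, hY⟩ := List.append_of_mem hyY
        have hXy : X.count y = 0 := by
          have : 1 ≤ Y.count y := List.one_le_count_iff.mpr hyY
          omega
        have hXy' : y ∉ X := List.count_eq_zero.mp hXy
        have hcounty2 : Y₁.count y + (Y₂.count y + 1) = 1 := by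
          have h1 : Y.count y = 1 := by omega
          rw [hY] at h1
          simpa [List.count_append, List.count_cons] using h1
        have hY1y : y ∉ Y₁ := List.count_eq_zero.mp (by omega)
        have hY2y : y ∉ Y₂ := List.count_eq_zero.mp (by omega)
        have hY1x : x ∉ Y₁ := fun h => hYx (by rw [hY]; simp [h])
        have hY2x : x ∉ Y₂ := fun h => hYx (by rw [hY]; simp [h])
        set P := X ++ x :: Y₁ with hP
        have hS : S = P ++ (y :: Y₂) := by rw [hXY, hY, hP]; simp
        have hPlen : P.length ≤ 2 ^ c - 1 := by
          have := ih (A.erase y) P d (by omega) (Finset.mem_erase.mpr ⟨Ne.symm hyd, hdA⟩)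
            (by
              intro z hz
              refine Finset.mem_erase.mpr ⟨?_, hmem z (by rw [hS]; simp [hz])⟩
              rintro rfl
              rcases List.mem_append.mp hz with h | h
              · exact hXy' h
              · rcases List.mem_cons.mp h with h | h
                · exact hxy h.symm
                · exact hY1y h)
            (intvUniq_of_append_left (hS ▸ hint)) (prefTwo_of_append (hS ▸ hpref))
          rw [hcardy, hc] at this
          simpa using this
        have hY2len : Y₂.length ≤ 2 ^ c - 1 := by
          have := cf_length_le (n + 1) ((A.erase y).erase x) Y₂ (by omega)
            (by
              intro z hz
              exact Finset.mem_erase.mpr ⟨fun h => hY2x (h ▸ hz), Finset.mem_erase.mpr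
                ⟨fun h => hY2y (h ▸ hz), hmem z (by rw [hS]; simp [hz])⟩⟩)
            (by
              have h1 : IntvUniq (y :: Y₂) := intvUniq_of_append_right (hS ▸ hint)
              exact intvUniq_of_append_right (P := [y]) h1)
          rw [hcardxy, hc] at this
          simpa using this
        have hlen : S.length = P.length + 1 + Y₂.length := by
          rw [hS, List.length_append, List.length_cons]; omega
        rw [hc]
        have h9 : 2 ^ (c + 2 - 1) = 2 ^ c + 2 ^ c := by
          rw [show c + 2 - 1 = c + 1 from by omega, hpow]
        omega
      · -- y occurs before x, i.e. y ∈ X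
        have hyX : y ∈ X := by
          have : y ∈ S := by
            by_contra h; rw [List.count_eq_zero_of_not_mem h] at hcy; omega
          rw [hXY] at this
          rcases List.mem_append.mp this with h | h
          · exact h
          · rcases List.mem_cons.mp h with h | h
            · exact absurd h.symm hxy
            · exact absurd h hyY
        have hYy : y ∉ Y := hyY
        have hS : S = X ++ (x :: Y) := by rw [hXY]
        have hXlen : X.length ≤ 2 ^ c - 1 := by
          have := ih (A.erase x) X d (by omega) (Finset.mem_erase.mpr ⟨Ne.symm hxd, hdA⟩)
            (by
              intro z hz
              exact Finset.mem_erase.mpr ⟨fun h => hXx (h ▸ hz),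
                hmem z (by rw [hS]; simp [hz])⟩)
            (intvUniq_of_append_left (hS ▸ hint)) (prefTwo_of_append (hS ▸ hpref))
          rw [hcardx, hc] at this
          -- this : X.length ≤ 2 ^ (c + 2 - 1 - 1) - 1
          simpa using this
        have hYlen : Y.length ≤ 2 ^ c - 1 := by
          have := cf_length_le (n + 1) ((A.erase x).erase y) Y (by omega)
            (by
              intro z hz
              exact Finset.mem_erase.mpr ⟨fun h => hYy (h ▸ hz), Finset.mem_erase.mpr
                ⟨fun h => hYx (h ▸ hz), hmem z (by rw [hS]; simp [hz])⟩⟩)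
            (by
              have h1 : IntvUniq (x :: Y) := intvUniq_of_append_right (hS ▸ hint)
              exact intvUniq_of_append_right (P := [x]) h1)
          rw [hcardyx, hc] at this
          simpa using this
        have hlen : S.length = X.length + 1 + Y.length := by
          rw [hS, List.length_append, List.length_cons]; omega
        rw [hc]
        have h9 : 2 ^ (c + 2 - 1) = 2 ^ c + 2 ^ c := by
          rw [show c + 2 - 1 = c + 1 from by omega, hpow]
        omega
    · -- d ∉ S : plain conflict-free over A.erase d
      have := cf_length_le (n+1) (A.erase d) S (by rw [Finset.card_erase_of_mem hdA]; omega)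
        (fun z hz => Finset.mem_erase.mpr ⟨fun h => hdS (h ▸ hz), hmem z hz⟩) hint
      rwa [Finset.card_erase_of_mem hdA] at this

namespace RtreeAux

open SimpleGraph

variable {k : ℕ}

lemma Npos : 0 < k + 2 ^ (k - 2) := by positivity

/-- the vertex with index `a` (truncated) -/
def vtx (k : ℕ) (a : ℕ) : Fin (k + 2 ^ (k - 2)) :=
  ⟨min a (k + 2 ^ (k - 2) - 1), by have := Npos (k := k); omega⟩

lemma vtx_val {a : ℕ} (h : a < k + 2 ^ (k - 2)) : ((vtx k a : Fin _) : ℕ) = a := by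
  simp only [vtx]
  omega

lemma vtx_inj {a b : ℕ} (ha : a < k + 2 ^ (k - 2)) (hb : b < k + 2 ^ (k - 2))
    (h : vtx k a = vtx k b) : a = b := by
  have := congrArg (fun x : Fin _ => (x : ℕ)) h
  simpa [vtx_val ha, vtx_val hb] using this

lemma kle : k ≤ 2 ^ k := Nat.lt_pow_self (n := k) (a := 2) (by norm_num) |>.le

lemma star_lt (hk : 2 ≤ k) {u : ℕ} (h2 : u ≤ k - 1) : u < k + 2 ^ (k - 2) := by
  have : 0 < 2 ^ (k - 2) := pow_pos (by norm_num) _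
  omega

lemma adj_star (hk : 2 ≤ k) {u : ℕ} (h1 : 1 ≤ u) (h2 : u ≤ k - 1) :
    (Rtree k).Adj (vtx k 0) (vtx k u) := by
  have hu : u < k + 2 ^ (k - 2) := star_lt hk h2
  have h0 : (0:ℕ) < k + 2 ^ (k - 2) := Npos
  rw [Rtree, SimpleGraph.fromRel_adj]
  constructor
  · intro h
    have := vtx_inj h0 hu h
    omega
  · left; left
    rw [vtx_val h0, vtx_val hu]
    exact ⟨rfl, h1, h2⟩

lemma adj_path (hk : 2 ≤ k) {x : ℕ} (h1 : k - 1 ≤ x) (h2 : x + 1 < k + 2 ^ (k - 2)) :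
    (Rtree k).Adj (vtx k x) (vtx k (x + 1)) := by
  rw [Rtree, SimpleGraph.fromRel_adj]
  constructor
  · intro h
    have := vtx_inj (by omega) h2 h
    omega
  · left; right
    rw [vtx_val (by omega), vtx_val h2]
    exact ⟨h1, rfl⟩

/-- the canonical walk along the path part, from `i` to `i + j` -/
def seg (hk : 2 ≤ k) (i : ℕ) (h1 : k - 1 ≤ i) :
    (j : ℕ) → (h2 : i + j < k + 2 ^ (k - 2)) → (Rtree k).Walk (vtx k i) (vtx k (i + j))
  | 0, _ => Walk.nil
  | j+1, h2 => (seg hk i h1 j (by omega)).concat (adj_path hk (by omega) h2)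

lemma seg_edges (hk : 2 ≤ k) (i : ℕ) (h1 : k - 1 ≤ i) (j : ℕ) (h2 : i + j < k + 2 ^ (k - 2)) :
    (seg hk i h1 j h2).edges = (List.range j).map (fun l => s(vtx k (i+l), vtx k (i+l+1))) := by
  induction j with
  | zero => simp [seg]
  | succ j ih =>
    rw [seg, Walk.edges_concat, ih (by omega), List.concat_eq_append, List.range_succ,
      List.map_append]
    rfl

lemma seg_support (hk : 2 ≤ k) (i : ℕ) (h1 : k - 1 ≤ i) (j : ℕ) (h2 : i + j < k + 2 ^ (k - 2)) :
    (seg hk i h1 j h2).support = (List.range (j+1)).map (fun l => vtx k (i+l)) := by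
  induction j with
  | zero => simp [seg, List.range_succ]
  | succ j ih =>
    rw [seg, Walk.support_concat, ih (by omega)]
    rw [List.range_succ (n := j + 1), List.map_append]
    rfl

lemma seg_isPath (hk : 2 ≤ k) (i : ℕ) (h1 : k - 1 ≤ i) (j : ℕ) (h2 : i + j < k + 2 ^ (k - 2)) :
    (seg hk i h1 j h2).IsPath := by
  rw [Walk.isPath_def, seg_support]
  refine List.Nodup.map_on ?_ List.nodup_range
  intro a ha b hb hab
  simp only [List.mem_range] at ha hb
  have := vtx_inj (by omega) (by omega) hab
  omega

/-- canonical walk from the center `0` to path vertex `k-1+j` -/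
def w0P (hk : 2 ≤ k) (j : ℕ) (hj : j ≤ 2 ^ (k - 2)) :
    (Rtree k).Walk (vtx k 0) (vtx k (k - 1 + j)) :=
  Walk.cons (adj_star hk (by omega) le_rfl) (seg hk (k-1) le_rfl j (by omega))

lemma w0P_edges (hk : 2 ≤ k) (j : ℕ) (hj : j ≤ 2 ^ (k - 2)) :
    (w0P hk j hj).edges = s(vtx k 0, vtx k (k-1)) ::
      (List.range j).map (fun l => s(vtx k (k-1+l), vtx k (k-1+l+1))) := by
  rw [w0P, Walk.edges_cons, seg_edges]

lemma w0P_isPath (hk : 2 ≤ k) (j : ℕ) (hj : j ≤ 2 ^ (k - 2)) :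
    (w0P hk j hj).IsPath := by
  rw [w0P, Walk.cons_isPath_iff]
  refine ⟨seg_isPath hk _ _ j _, ?_⟩
  rw [seg_support]
  simp only [List.mem_map, List.mem_range, not_exists]
  intro l hl
  have := vtx_inj (by omega) (by have := Npos (k := k); omega) hl.2
  omega

/-- canonical walk from leaf `u` to path vertex `k-1+j` -/
def wLP (hk : 2 ≤ k) (u : ℕ) (h1 : 1 ≤ u) (h2 : u ≤ k - 2) (j : ℕ) (hj : j ≤ 2 ^ (k - 2)) :
    (Rtree k).Walk (vtx k u) (vtx k (k - 1 + j)) :=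
  Walk.cons (adj_star hk h1 (by omega)).symm (w0P hk j hj)

lemma wLP_edges (hk : 2 ≤ k) (u : ℕ) (h1 : 1 ≤ u) (h2 : u ≤ k - 2) (j : ℕ)
    (hj : j ≤ 2 ^ (k - 2)) :
    (wLP hk u h1 h2 j hj).edges = s(vtx k u, vtx k 0) :: s(vtx k 0, vtx k (k-1)) ::
      (List.range j).map (fun l => s(vtx k (k-1+l), vtx k (k-1+l+1))) := by
  rw [wLP, Walk.edges_cons, w0P_edges]

lemma wLP_isPath (hk : 2 ≤ k) (u : ℕ) (h1 : 1 ≤ u) (h2 : u ≤ k - 2) (j : ℕ)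
    (hj : j ≤ 2 ^ (k - 2)) : (wLP hk u h1 h2 j hj).IsPath := by
  rw [wLP, Walk.cons_isPath_iff]
  refine ⟨w0P_isPath hk j hj, ?_⟩
  rw [w0P, Walk.support_cons, seg_support]
  simp only [List.mem_cons, List.mem_map, List.mem_range, not_or, not_exists]
  have hN := Npos (k := k)
  constructor
  · intro h
    have := vtx_inj (by omega) (by omega) h
    omega
  · intro l hl
    have := vtx_inj (by omega) (by omega) hl.2
    omega

/-- canonical walk from leaf `u` to leaf `v` through the center -/
def wLL (hk : 2 ≤ k) (u v : ℕ) (h1 : 1 ≤ u) (h2 : u ≤ k - 1) (h3 : 1 ≤ v) (h4 : v ≤ k - 1) :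
    (Rtree k).Walk (vtx k u) (vtx k v) :=
  Walk.cons (adj_star hk h1 h2).symm (Walk.cons (adj_star hk h3 h4) Walk.nil)

lemma wLL_edges (hk : 2 ≤ k) (u v : ℕ) (h1 : 1 ≤ u) (h2 : u ≤ k - 1) (h3 : 1 ≤ v)
    (h4 : v ≤ k - 1) : (wLL hk u v h1 h2 h3 h4).edges =
      [s(vtx k u, vtx k 0), s(vtx k 0, vtx k v)] := by
  rw [wLL]; rfl

lemma wLL_isPath (hk : 2 ≤ k) (u v : ℕ) (h1 : 1 ≤ u) (h2 : u ≤ k - 1) (h3 : 1 ≤ v)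
    (h4 : v ≤ k - 1) (huv : u ≠ v) : (wLL hk u v h1 h2 h3 h4).IsPath := by
  have hN := Npos (k := k)
  rw [wLL, Walk.cons_isPath_iff, Walk.cons_isPath_iff]
  refine ⟨⟨Walk.IsPath.nil, ?_⟩, ?_⟩
  · simp only [Walk.support_nil, List.mem_singleton]
    intro h
    have := vtx_inj (by omega) (star_lt hk h4) h
    omega
  · simp only [Walk.support_cons, Walk.support_nil, List.mem_cons, List.mem_singleton]
    push_neg
    refine ⟨?_, ?_, by simp⟩
    · intro h
      have := vtx_inj (star_lt hk h2) (by omega) h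
      omega
    · intro h
      exact huv (vtx_inj (star_lt hk h2) (star_lt hk h4) h)

lemma reach_invariant {V : Type*} {G : SimpleGraph V} (P : V → Prop)
    (hP : ∀ a b, G.Adj a b → (P a ↔ P b)) {u v : V} (h : G.Reachable u v) : P u ↔ P v := by
  obtain ⟨w⟩ := h
  induction w with
  | nil => rfl
  | cons h p ih => exact (hP _ _ h).trans ih

lemma not_adj_del {a b x y : Fin (k + 2 ^ (k - 2))}
    (h : ((Rtree k) \ SimpleGraph.fromEdgeSet {s(a, b)}).Adj x y) :
    (Rtree k).Adj x y ∧ s(x, y) ≠ s(a, b) := by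
  rw [SimpleGraph.sdiff_adj, SimpleGraph.fromEdgeSet_adj] at h
  obtain ⟨h1, h2⟩ := h
  refine ⟨h1, fun h3 => h2 ⟨by simp [h3], h1.ne⟩⟩

/-- the relation underlying `Rtree` -/
lemma rtree_adj {x y : Fin (k + 2 ^ (k - 2))} (h : (Rtree k).Adj x y) :
    x ≠ y ∧ (((x : ℕ) = 0 ∧ 1 ≤ (y : ℕ) ∧ (y : ℕ) ≤ k - 1) ∨
      (k - 1 ≤ (x : ℕ) ∧ (y : ℕ) = (x : ℕ) + 1) ∨
      ((y : ℕ) = 0 ∧ 1 ≤ (x : ℕ) ∧ (x : ℕ) ≤ k - 1) ∨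
      (k - 1 ≤ (y : ℕ) ∧ (x : ℕ) = (y : ℕ) + 1)) := by
  rw [Rtree, SimpleGraph.fromRel_adj] at h
  tauto

lemma rtree_acyclic (hk : 2 ≤ k) : (Rtree k).IsAcyclic := by
  rw [SimpleGraph.isAcyclic_iff_forall_adj_isBridge]
  have hN := Npos (k := k)
  -- it suffices to treat oriented relations
  suffices key : ∀ a b : Fin (k + 2 ^ (k - 2)), (Rtree k).Adj a b →
      (((a : ℕ) = 0 ∧ 1 ≤ (b : ℕ) ∧ (b : ℕ) ≤ k - 1) ∨
       (k - 1 ≤ (a : ℕ) ∧ (b : ℕ) = (a : ℕ) + 1)) → (Rtree k).IsBridge s(a, b) by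
    intro v w hvw
    rcases (rtree_adj hvw).2 with h | h | h | h
    · exact key v w hvw (Or.inl h)
    · exact key v w hvw (Or.inr h)
    · rw [Sym2.eq_swap]; exact key w v hvw.symm (Or.inl h)
    · rw [Sym2.eq_swap]; exact key w v hvw.symm (Or.inr h)
  intro a b hadj hrel
  rw [SimpleGraph.isBridge_iff]
  intro hreach
  rcases hrel with ⟨ha0, hb1, hbk⟩ | ⟨hak, hb⟩
  · by_cases hbk2 : (b : ℕ) ≤ k - 2
    · -- leaf edge : the leaf b is isolated after deletion
      have := reach_invariant (fun x => x = b) ?_ hreach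
      · rw [iff_true_right rfl] at this
        exact hadj.ne this
      · intro x y hxy
        obtain ⟨hxy', hne⟩ := not_adj_del hxy
        obtain ⟨hne2, hrel⟩ := rtree_adj hxy'
        constructor
        · rintro rfl
          exfalso
          rcases hrel with ⟨h1, h2, h3⟩ | ⟨h1, h2⟩ | ⟨h1, h2, h3⟩ | ⟨h1, h2⟩
          · omega
          · omega
          · -- y is the center, x = b : the deleted edge
            have hy : y = a := Fin.ext (by omega)
            exact hne (by rw [hy, Sym2.eq_swap])
          · omega
        · rintro rfl
          exfalso
          rcases hrel with ⟨h1, h2, h3⟩ | ⟨h1, h2⟩ | ⟨h1, h2, h3⟩ | ⟨h1, h2⟩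
          · have hx : x = a := Fin.ext (by omega)
            exact hne (by rw [hx])
          · omega
          · omega
          · omega
    · -- b is the vertex k-1 : cut at k-1
      have hbv : (b : ℕ) = k - 1 := by omega
      have := reach_invariant (fun x : Fin (k + 2 ^ (k - 2)) => k - 1 ≤ (x : ℕ)) ?_ hreach
      · omega
      · intro x y hxy
        obtain ⟨hxy', hne⟩ := not_adj_del hxy
        obtain ⟨hne2, hrel⟩ := rtree_adj hxy'
        rcases hrel with ⟨h1, h2, h3⟩ | ⟨h1, h2⟩ | ⟨h1, h2, h3⟩ | ⟨h1, h2⟩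
        · constructor
          · intro h; omega
          · intro h
            exfalso
            have hx : x = a := Fin.ext (by omega)
            have hy : y = b := Fin.ext (by omega)
            exact hne (by rw [hx, hy])
        · constructor <;> (intro h; omega)
        · constructor
          · intro h
            exfalso
            have hy : y = a := Fin.ext (by omega)
            have hx : x = b := Fin.ext (by omega)
            exact hne (by rw [hx, hy, Sym2.eq_swap])
          · intro h; omega
        · constructor <;> (intro h; omega)
  · -- path edge {a, a+1} : cut at a+1
    have := reach_invariant (fun x : Fin (k + 2 ^ (k - 2)) => (a : ℕ) + 1 ≤ (x : ℕ)) ?_ hreach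
    · omega
    · intro x y hxy
      obtain ⟨hxy', hne⟩ := not_adj_del hxy
      obtain ⟨hne2, hrel⟩ := rtree_adj hxy'
      rcases hrel with ⟨h1, h2, h3⟩ | ⟨h1, h2⟩ | ⟨h1, h2, h3⟩ | ⟨h1, h2⟩
      · constructor <;> (intro h; omega)
      · constructor
        · intro h; omega
        · intro h
          rcases Nat.lt_or_ge (x : ℕ) ((a : ℕ) + 1) with hlt | hge
          · exfalso
            have hx : x = a := Fin.ext (by omega)
            have hy : y = b := Fin.ext (by omega)
            exact hne (by rw [hx, hy])
          · exact hge
      · constructor <;> (intro h; omega)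
      · constructor
        · intro h
          rcases Nat.lt_or_ge (y : ℕ) ((a : ℕ) + 1) with hlt | hge
          · exfalso
            have hy : y = a := Fin.ext (by omega)
            have hx : x = b := Fin.ext (by omega)
            exact hne (by rw [hx, hy, Sym2.eq_swap])
          · exact hge
        · intro h; omega

lemma val2_between {u v M : ℕ} (hu : 0 < u) (huv : u < v)
    (hfu : u.factorization 2 = M) (hfv : v.factorization 2 = M) :
    ∃ z, u < z ∧ z ≤ v ∧ M < z.factorization 2 := by
  have hv : 0 < v := lt_trans hu huv
  have h2 : Nat.Prime 2 := Nat.prime_two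
  have hud : 2 ^ M ∣ u := by rw [← hfu]; exact Nat.ordProj_dvd u 2
  have hvd : 2 ^ M ∣ v := by rw [← hfv]; exact Nat.ordProj_dvd v 2
  obtain ⟨ou, hou⟩ := hud
  obtain ⟨ov, hov⟩ := hvd
  have hpos : 0 < 2 ^ M := pow_pos (by norm_num) _
  have houodd : ¬ 2 ∣ ou := by
    have h3 := Nat.not_dvd_ordCompl h2 hu.ne'
    have hcompl : u / 2 ^ u.factorization 2 = ou := by
      rw [hfu, hou]
      exact Nat.mul_div_cancel_left ou hpos
    rwa [hcompl] at h3
  have houpos : 0 < ou := by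
    rcases Nat.eq_zero_or_pos ou with h | h
    · subst h; simp at hou; omega
    · exact h
  have hlt : ou < ov := by
    by_contra h
    push_neg at h
    have : v ≤ u := by rw [hou, hov]; exact Nat.mul_le_mul_left _ h
    omega
  obtain ⟨m, hm⟩ : 2 ∣ ou + 1 := by omega
  refine ⟨2 ^ M * (ou + 1), ?_, ?_, ?_⟩
  · rw [hou]; exact (Nat.mul_lt_mul_left hpos).mpr (by omega)
  · rw [hov]; exact Nat.mul_le_mul_left _ (by omega)
  · have hz : 2 ^ M * (ou + 1) = 2 ^ (M + 1) * m := by rw [hm, pow_succ]; ring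
    have hzpos : 0 < 2 ^ M * (ou + 1) := by positivity
    have hdvd : 2 ^ (M + 1) ∣ 2 ^ M * (ou + 1) := ⟨m, hz⟩
    have := (Nat.Prime.pow_dvd_iff_le_factorization h2 hzpos.ne').mp hdvd
    omega

lemma ruler_unique (a j : ℕ) (ha : 1 ≤ a) (hj : 1 ≤ j) :
    ∃ M, ((Finset.range j).filter (fun l => (a + l).factorization 2 = M)).card = 1 := by
  obtain ⟨l₀, hl₀, hmax⟩ := Finset.exists_max_image (Finset.range j)
    (fun l => (a + l).factorization 2) ⟨0, Finset.mem_range.mpr hj⟩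
  refine ⟨(a + l₀).factorization 2, ?_⟩
  rw [Finset.card_eq_one]
  refine ⟨l₀, ?_⟩
  rw [Finset.eq_singleton_iff_unique_mem]
  refine ⟨Finset.mem_filter.mpr ⟨hl₀, rfl⟩, ?_⟩
  intro l hl
  obtain ⟨hlr, hlf⟩ := Finset.mem_filter.mp hl
  by_contra hne
  have key : ∀ l₁ l₂ : ℕ, l₁ < l₂ → l₂ ∈ Finset.range j →
      (a + l₁).factorization 2 = (a + l₀).factorization 2 →
      (a + l₂).factorization 2 = (a + l₀).factorization 2 → False := by
    intro l₁ l₂ h12 h2r hf1 hf2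
    obtain ⟨z, hz1, hz2, hz3⟩ := val2_between (u := a + l₁) (v := a + l₂) (by omega)
      (by omega) hf1 hf2
    have hzr : z - a ∈ Finset.range j := by
      rw [Finset.mem_range] at h2r ⊢
      omega
    have := hmax (z - a) hzr
    rw [show a + (z - a) = z by omega] at this
    omega
  rcases Nat.lt_or_ge l l₀ with h | h
  · exact key l l₀ h hl₀ hlf rfl
  · exact key l₀ l (by omega) hlr rfl hlf

/-- the coloring function on ordered pairs -/
def colg (k : ℕ) (x y : ℕ) : ℕ :=
  if x = 0 then (if y = k - 1 then k - 1 else y - 1) else (y - (k-1)).factorization 2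

/-- the conflict-free coloring of `Rtree k` -/
def rcol (k : ℕ) : Sym2 (Fin (k + 2 ^ (k - 2))) → ℕ :=
  Sym2.lift ⟨fun a b => colg k (min a.val b.val) (max a.val b.val), by
    intro a b; simp [min_comm, max_comm]⟩

lemma rcol_star (hk : 2 ≤ k) {u : ℕ} (h1 : 1 ≤ u) (h2 : u ≤ k - 1) :
    rcol k s(vtx k 0, vtx k u) = if u = k - 1 then k - 1 else u - 1 := by
  have hN := Npos (k := k)
  rw [rcol]
  simp only [Sym2.lift_mk]
  rw [vtx_val (by omega), vtx_val (star_lt hk h2)]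
  simp [colg, Nat.min_eq_left (Nat.zero_le u), Nat.max_eq_right (Nat.zero_le u)]

lemma rcol_path (hk : 2 ≤ k) {x : ℕ} (h1 : k - 1 ≤ x) (h2 : x + 1 < k + 2 ^ (k - 2)) :
    rcol k s(vtx k x, vtx k (x+1)) = (x + 1 - (k-1)).factorization 2 := by
  rw [rcol]
  simp only [Sym2.lift_mk]
  rw [vtx_val (by omega), vtx_val h2]
  rw [show min x (x+1) = x by omega, show max x (x+1) = x + 1 by omega]
  simp only [colg, if_neg (by omega : ¬ x = 0)]

lemma val2_le {j m : ℕ} (h1 : 1 ≤ j) (h2 : j ≤ 2 ^ m) : j.factorization 2 ≤ m := by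
  have hd : 2 ^ (j.factorization 2) ∣ j := Nat.ordProj_dvd j 2
  have := Nat.le_of_dvd (by omega) hd
  have h3 : 2 ^ j.factorization 2 ≤ 2 ^ m := le_trans this h2
  exact (Nat.pow_le_pow_iff_right (by norm_num)).mp h3

lemma filter_count {α : Type*} (g : α → ℕ) (l : List α) (m : ℕ) :
    (l.filter (fun e => g e = m)).length = (l.map g).count m := by
  induction l with
  | nil => simp
  | cons a t ih =>
    by_cases h : g a = m
    · simp [List.filter_cons, List.count_cons, h, ih]
    · simp [List.filter_cons, List.count_cons, h, ih]

lemma count_map_range (f : ℕ → ℕ) (j m : ℕ) :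
    ((List.range j).map f).count m = ((Finset.range j).filter (fun l => f l = m)).card := by
  induction j with
  | zero => simp
  | succ j ih =>
    rw [List.range_succ, List.map_append, List.count_append, Finset.range_add_one,
      Finset.filter_insert]
    by_cases h : f j = m
    · rw [if_pos h, Finset.card_insert_of_notMem (by simp)]
      simp [h, ih]
    · rw [if_neg h]
      simp [List.count_cons, h, ih]

lemma seg_colors (hk : 2 ≤ k) (i : ℕ) (h1 : k - 1 ≤ i) (j : ℕ) (h2 : i + j < k + 2 ^ (k - 2)) :
    (seg hk i h1 j h2).edges.map (rcol k) =
      (List.range j).map (fun l => (i + l + 1 - (k-1)).factorization 2) := by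
  rw [seg_edges, List.map_map]
  refine List.map_congr_left ?_
  intro l hl
  rw [List.mem_range] at hl
  exact rcol_path hk (by omega) (by omega)

lemma seg_colors_lt (hk : 2 ≤ k) (i : ℕ) (h1 : k - 1 ≤ i) (j : ℕ) (h2 : i + j < k + 2 ^ (k - 2))
    {m : ℕ} (hm : m ∈ (seg hk i h1 j h2).edges.map (rcol k)) : m ≤ k - 2 := by
  rw [seg_colors hk] at hm
  obtain ⟨l, hl, rfl⟩ := List.mem_map.mp hm
  rw [List.mem_range] at hl
  exact val2_le (by omega) (by omega)

/-- main upper bound construction : for `x < y` there is a good path -/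
lemma exists_good_path (hk : 2 ≤ k) (x y : ℕ) (hxy : x < y) (hy : y < k + 2 ^ (k - 2)) :
    ∃ p : (Rtree k).Walk (vtx k x) (vtx k y), p.IsPath ∧
      ∃ m : ℕ, (p.edges.map (rcol k)).count m = 1 := by
  have hN := Npos (k := k)
  rcases Nat.lt_or_ge y (k-1) with hyk | hyk
  · -- both in the star part, y ≤ k - 2
    rcases Nat.eq_zero_or_pos x with rfl | hx1
    · refine ⟨Walk.cons (adj_star hk (by omega) (by omega)) Walk.nil, ?_, ?_⟩
      · rw [Walk.cons_isPath_iff]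
        refine ⟨Walk.IsPath.nil, ?_⟩
        simp only [Walk.support_nil, List.mem_singleton]
        intro h
        have := vtx_inj (by omega) (by omega) h
        omega
      · refine ⟨y - 1, ?_⟩
        simp [rcol_star hk (by omega : 1 ≤ y) (by omega), if_neg (by omega : ¬ y = k - 1)]
    · refine ⟨wLL hk x y hx1 (by omega) (by omega) (by omega), wLL_isPath hk x y hx1 (by omega)
        (by omega) (by omega) (by omega), x - 1, ?_⟩
      rw [wLL_edges]
      have e1 : rcol k s(vtx k x, vtx k 0) = x - 1 := by
        rw [Sym2.eq_swap, rcol_star hk hx1 (by omega), if_neg (by omega : ¬ x = k - 1)]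
      have e2 : rcol k s(vtx k 0, vtx k y) = y - 1 := by
        rw [rcol_star hk (by omega) (by omega), if_neg (by omega : ¬ y = k - 1)]
      simp [e1, e2, List.count_cons]
      omega
  · -- y is in the path part (or is the vertex k-1)
    rcases Nat.eq_zero_or_pos x with rfl | hx1
    · -- from the center
      have hj : y - (k-1) ≤ 2 ^ (k - 2) := by omega
      have hyy : k - 1 + (y - (k-1)) = y := by omega
      rw [← hyy]
      refine ⟨w0P hk (y - (k-1)) hj, w0P_isPath hk _ hj, k - 1, ?_⟩
      have e1 : rcol k s(vtx k 0, vtx k (k-1)) = k - 1 := by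
        rw [rcol_star hk (by omega) le_rfl, if_pos rfl]
      rw [w0P, Walk.edges_cons, List.map_cons, List.count_cons, e1]
      rw [List.count_eq_zero.mpr ?hz]
      case hz =>
        intro hmem
        have := seg_colors_lt hk (k-1) le_rfl (y - (k-1)) (by omega) hmem
        omega
      simp
    · rcases Nat.lt_or_ge x (k-1) with hxk | hxk
      · -- from a proper leaf into the path part
        have hj : y - (k-1) ≤ 2 ^ (k - 2) := by omega
        have hyy : k - 1 + (y - (k-1)) = y := by omega
        rw [← hyy]
        refine ⟨wLP hk x hx1 (by omega) (y - (k-1)) hj,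
          wLP_isPath hk x hx1 (by omega) _ hj, k - 1, ?_⟩
        have e1 : rcol k s(vtx k 0, vtx k (k-1)) = k - 1 := by
          rw [rcol_star hk (by omega) le_rfl, if_pos rfl]
        have e2 : rcol k s(vtx k x, vtx k 0) = x - 1 := by
          rw [Sym2.eq_swap, rcol_star hk hx1 (by omega), if_neg (by omega : ¬ x = k - 1)]
        rw [wLP, Walk.edges_cons, List.map_cons, List.count_cons, w0P, Walk.edges_cons,
          List.map_cons, List.count_cons, e1, e2]
        rw [List.count_eq_zero.mpr ?hz]
        case hz =>
          intro hmem
          have := seg_colors_lt hk (k-1) le_rfl (y - (k-1)) (by omega) hmem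
          omega
        have hx2 : ¬ (x - 1 = k - 1) := by omega
        simp [hx2]
      · -- both in the path part
        have hyy : x + (y - x) = y := by omega
        rw [← hyy]
        refine ⟨seg hk x hxk (y - x) (by omega), seg_isPath hk x hxk _ _, ?_⟩
        rw [seg_colors hk]
        obtain ⟨M, hM⟩ := ruler_unique (x + 1 - (k-1)) (y - x) (by omega) (by omega)
        refine ⟨M, ?_⟩
        rw [count_map_range]
        have hset : (Finset.range (y-x)).filter
              (fun l => (x + l + 1 - (k-1)).factorization 2 = M) =
            (Finset.range (y-x)).filter
              (fun l => (x + 1 - (k-1) + l).factorization 2 = M) := by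
          refine Finset.filter_congr ?_
          intro l hl
          rw [show x + l + 1 - (k-1) = x + 1 - (k-1) + l from by omega]
        rw [hset, hM]

lemma colg_lt (hk : 2 ≤ k) {xa xb : ℕ}
    (hcase : (xa = 0 ∧ 1 ≤ xb ∧ xb ≤ k - 1) ∨
      (k - 1 ≤ xa ∧ xb = xa + 1 ∧ xb < k + 2 ^ (k - 2))) : colg k xa xb < k := by
  rcases hcase with ⟨h1, h2, h3⟩ | ⟨h1, h2, h3⟩
  · subst h1
    rw [colg, if_pos rfl]
    by_cases hbk : xb = k - 1
    · rw [if_pos hbk]; omega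
    · rw [if_neg hbk]; omega
  · rw [colg, if_neg (by omega)]
    have := val2_le (j := xb - (k-1)) (m := k - 2) (by omega) (by omega)
    omega

lemma rcol_lt (hk : 2 ≤ k) : ∀ e ∈ (Rtree k).edgeSet, rcol k e < k := by
  intro e
  induction e using Sym2.ind with
  | _ a b =>
    intro he
    rw [SimpleGraph.mem_edgeSet] at he
    have h := rtree_adj he
    have hb := b.isLt
    have ha := a.isLt
    rw [rcol]
    simp only [Sym2.lift_mk]
    rcases h.2 with ⟨h1, h2, h3⟩ | ⟨h1, h2⟩ | ⟨h1, h2, h3⟩ | ⟨h1, h2⟩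
    · rw [show min a.val b.val = a.val from by omega, show max a.val b.val = b.val from by omega]
      exact colg_lt hk (Or.inl ⟨h1, h2, h3⟩)
    · rw [show min a.val b.val = a.val from by omega, show max a.val b.val = b.val from by omega]
      exact colg_lt hk (Or.inr ⟨h1, h2, by omega⟩)
    · rw [show min a.val b.val = b.val from by omega, show max a.val b.val = a.val from by omega]
      exact colg_lt hk (Or.inl ⟨h1, h2, h3⟩)
    · rw [show min a.val b.val = b.val from by omega, show max a.val b.val = a.val from by omega]
      exact colg_lt hk (Or.inr ⟨h1, h2, by omega⟩)

lemma rtree_cfc (hk : 2 ≤ k) : IsCFCColoring (Rtree k) (rcol k) := by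
  rintro ⟨x, hx⟩ ⟨y, hy⟩ hne
  have hxy : x ≠ y := fun h => hne (Fin.ext h)
  rw [show (⟨x, hx⟩ : Fin (k + 2 ^ (k - 2))) = vtx k x from Fin.ext (vtx_val hx).symm,
    show (⟨y, hy⟩ : Fin (k + 2 ^ (k - 2))) = vtx k y from Fin.ext (vtx_val hy).symm]
  rcases Nat.lt_or_ge x y with h | h
  · obtain ⟨p, hp, m, hm⟩ := exists_good_path hk x y h hy
    exact ⟨p, hp, m, by rw [filter_count]; exact hm⟩
  · obtain ⟨p, hp, m, hm⟩ := exists_good_path hk y x (by omega) hx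
    refine ⟨p.reverse, hp.reverse, m, ?_⟩
    rw [filter_count, Walk.edges_reverse, List.map_reverse, List.count_reverse]
    exact hm

lemma witness (hk : 2 ≤ k) {c : Sym2 (Fin (k + 2 ^ (k - 2))) → ℕ}
    (hcfc : IsCFCColoring (Rtree k) c) {u v : Fin (k + 2 ^ (k - 2))} (hne : u ≠ v)
    (q : (Rtree k).Walk u v) (hq : q.IsPath) : ∃ m, (q.edges.map c).count m = 1 := by
  obtain ⟨p, hp, m, hm⟩ := hcfc u v hne
  have hpq : p = q := Subtype.mk_eq_mk.mp ((rtree_acyclic hk).path_unique ⟨p, hp⟩ ⟨q, hq⟩)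
  subst hpq
  exact ⟨m, by rw [← filter_count]; exact hm⟩

/-- the sequence of colors along the path part -/
def pcolors (k : ℕ) (c : Sym2 (Fin (k + 2 ^ (k - 2))) → ℕ) : List ℕ :=
  (List.range (2 ^ (k - 2))).map (fun l => c s(vtx k (k-1+l), vtx k (k-1+l+1)))

lemma map_range_decomp {f : ℕ → ℕ} {n : ℕ} {l₁ m l₂ : List ℕ}
    (h : (List.range n).map f = l₁ ++ (m ++ l₂)) :
    m = (List.range m.length).map (fun i => f (l₁.length + i)) := by
  have hlen : l₁.length + (m.length + l₂.length) = n := by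
    have := congrArg List.length h
    simp at this
    omega
  refine List.ext_getElem (by simp) ?_
  intro i h1 h2
  simp only [List.getElem_map, List.getElem_range]
  have h4 := congrArg (fun l => l[l₁.length + i]?) h
  rw [List.getElem?_map, List.getElem?_range (by omega)] at h4
  rw [List.getElem?_append_right (by omega), Nat.add_sub_cancel_left,
    List.getElem?_append_left (by omega), List.getElem?_eq_getElem h1] at h4
  exact (Option.some.inj h4).symm

lemma pcolors_intvUniq (hk : 2 ≤ k) {c : Sym2 (Fin (k + 2 ^ (k - 2))) → ℕ}
    (hcfc : IsCFCColoring (Rtree k) c) : IntvUniq (pcolors k c) := by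
  intro l₁ m l₂ hm hne
  have hdec : m = (List.range m.length).map
      (fun i => c s(vtx k (k-1+(l₁.length + i)), vtx k (k-1+(l₁.length + i)+1))) :=
    map_range_decomp (by rw [← List.append_assoc, ← hm]; rfl)
  have hlen : l₁.length + (m.length + l₂.length) = 2 ^ (k - 2) := by
    have := congrArg List.length hm
    simp [pcolors] at this
    omega
  set a := l₁.length
  set b := m.length with hb
  have hbpos : 1 ≤ b := by
    cases m
    · exact absurd rfl hne
    · simp [hb]
  have hN := Npos (k := k)
  have hcolors : (seg hk (k-1+a) (by omega) b (by omega)).edges.map c = m := by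
    rw [seg_edges, List.map_map, hdec]
    refine List.map_congr_left ?_
    intro l hl
    simp only [Function.comp]
    rw [show k - 1 + a + l = k - 1 + (a + l) from by omega,
      show k - 1 + (a + l) + 1 = k - 1 + (a + l) + 1 from rfl]
  obtain ⟨m', hm'⟩ := witness hk hcfc (u := vtx k (k-1+a)) (v := vtx k (k-1+(a+b)))
    (by
      intro h
      have := vtx_inj (by omega) (by omega) h
      omega)
    ((seg hk (k-1+a) (by omega) b (by omega)).copy rfl (by
      congr 1
      omega))
    (by rw [Walk.isPath_copy]; exact seg_isPath hk _ _ _ _)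
  refine ⟨m', ?_⟩
  rw [Walk.edges_copy, hcolors] at hm'
  exact hm'

lemma star_colors_ne (hk : 2 ≤ k) {c : Sym2 (Fin (k + 2 ^ (k - 2))) → ℕ}
    (hcfc : IsCFCColoring (Rtree k) c) {u v : ℕ} (h1 : 1 ≤ u) (h2 : u ≤ k - 1)
    (h3 : 1 ≤ v) (h4 : v ≤ k - 1) (huv : u ≠ v) :
    c s(vtx k 0, vtx k u) ≠ c s(vtx k 0, vtx k v) := by
  intro heq
  obtain ⟨m, hm⟩ := witness hk hcfc (u := vtx k u) (v := vtx k v)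
    (fun h => huv (vtx_inj (star_lt hk h2) (star_lt hk h4) h))
    (wLL hk u v h1 h2 h3 h4) (wLL_isPath hk u v h1 h2 h3 h4 huv)
  rw [wLL_edges] at hm
  simp only [List.map_cons, List.map_nil] at hm
  rw [Sym2.eq_swap (a := vtx k u), heq] at hm
  rcases eq_or_ne m (c s(vtx k 0, vtx k v)) with h | h
  · rw [h] at hm; simp [List.count_cons] at hm
  · rw [List.count_eq_zero.mpr (by simp [h])] at hm
    omega

lemma star_colors_surj (hk : 2 ≤ k) {c : Sym2 (Fin (k + 2 ^ (k - 2))) → ℕ}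
    (hbd : ∀ e ∈ (Rtree k).edgeSet, c e < k - 1)
    (hcfc : IsCFCColoring (Rtree k) c) {x₀ : ℕ} (hx₀ : x₀ < k - 1) :
    ∃ u, 1 ≤ u ∧ u ≤ k - 1 ∧ c s(vtx k 0, vtx k u) = x₀ := by
  have hbd' : ∀ u : ℕ, 1 ≤ u → u ≤ k - 1 → c s(vtx k 0, vtx k u) < k - 1 := by
    intro u hu1 hu2
    exact hbd _ ((SimpleGraph.mem_edgeSet _).mpr (adj_star hk hu1 hu2))
  let f : Fin (k-1) → Fin (k-1) := fun u => ⟨c s(vtx k 0, vtx k (u.val+1)),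
    hbd' (u.val+1) (by omega) (by omega)⟩
  have hinj : Function.Injective f := by
    intro a b hab
    by_contra hne
    have hne' : a.val + 1 ≠ b.val + 1 := fun h => hne (Fin.ext (by omega))
    exact star_colors_ne hk hcfc (by omega) (by omega : a.val + 1 ≤ k - 1) (by omega)
      (by omega : b.val + 1 ≤ k - 1) hne' (congrArg Fin.val hab)
  have hsurj : Function.Surjective f := Finite.surjective_of_injective hinj
  obtain ⟨u, hu⟩ := hsurj ⟨x₀, hx₀⟩
  exact ⟨u.val + 1, by omega, by omega, congrArg Fin.val hu⟩

lemma pcolors_mem (hk : 2 ≤ k) {c : Sym2 (Fin (k + 2 ^ (k - 2))) → ℕ}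
    (hbd : ∀ e ∈ (Rtree k).edgeSet, c e < k - 1) {x : ℕ} (hx : x ∈ pcolors k c) : x < k - 1 := by
  obtain ⟨l, hl, rfl⟩ := List.mem_map.mp hx
  rw [List.mem_range] at hl
  refine hbd _ ((SimpleGraph.mem_edgeSet _).mpr (adj_path hk (by omega) (by omega)))

lemma pcolors_prefTwo (hk : 2 ≤ k) {c : Sym2 (Fin (k + 2 ^ (k - 2))) → ℕ}
    (hbd : ∀ e ∈ (Rtree k).edgeSet, c e < k - 1)
    (hcfc : IsCFCColoring (Rtree k) c) :
    PrefTwo (c s(vtx k 0, vtx k (k-1))) (pcolors k c) := by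
  set d := c s(vtx k 0, vtx k (k-1)) with hd
  intro P Q hPQ hdP
  have hN := Npos (k := k)
  set j := P.length with hj
  have hdec : P = (List.range j).map
      (fun l => c s(vtx k (k-1+l), vtx k (k-1+l+1))) := by
    have := map_range_decomp (l₁ := []) (m := P) (l₂ := Q) (by rw [← hPQ]; rfl)
    simpa using this
  have hlen : j + Q.length = 2 ^ (k - 2) := by
    have := congrArg List.length hPQ
    simp [pcolors, hj] at this
    omega
  have hjpos : 1 ≤ j := by
    cases P
    · simp at hdP
    · simp [hj]
  have hj2 : j ≤ 2 ^ (k - 2) := by omega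
  -- first unique color: from the path 0 → (k-1)+j
  have hw0 : ((w0P hk j hj2).edges.map c) = d :: P := by
    rw [w0P_edges, List.map_cons, List.map_map, hdec]
    rfl
  obtain ⟨x₀, hx₀⟩ := witness hk hcfc (u := vtx k 0) (v := vtx k (k-1+j))
    (by
      intro h
      have := vtx_inj (by omega) (by omega) h
      omega)
    (w0P hk j hj2) (w0P_isPath hk j hj2)
  rw [hw0] at hx₀
  have hdPcount : 1 ≤ P.count d := List.one_le_count_iff.mpr hdP
  have hx₀d : x₀ ≠ d := by
    intro h
    rw [h, List.count_cons_self] at hx₀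
    omega
  have hx₀P : P.count x₀ = 1 := by
    rwa [List.count_cons_of_ne (Ne.symm hx₀d)] at hx₀
  -- x₀ is a color of an edge, so x₀ < k - 1 ; find the leaf with that color
  have hx₀lt : x₀ < k - 1 := by
    refine pcolors_mem hk hbd (x := x₀) ?_
    have : x₀ ∈ P := by
      by_contra h
      rw [List.count_eq_zero_of_not_mem h] at hx₀P
      omega
    rw [hPQ]
    exact List.mem_append_left _ this
  obtain ⟨u, hu1, hu2, hu3⟩ := star_colors_surj hk hbd hcfc hx₀lt
  have huk : u ≠ k - 1 := by
    intro h
    rw [h] at hu3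
    exact hx₀d (hu3.symm.trans hd.symm)
  -- second unique color: from the path u → (k-1)+j
  have hwL : ((wLP hk u hu1 (by omega) j hj2).edges.map c) = x₀ :: d :: P := by
    rw [wLP_edges, List.map_cons, List.map_cons, List.map_map, hdec]
    rw [Sym2.eq_swap (a := vtx k u), hu3]
    rfl
  obtain ⟨y₀, hy₀⟩ := witness hk hcfc (u := vtx k u) (v := vtx k (k-1+j))
    (by
      intro h
      have := vtx_inj (by omega) (by omega) h
      omega)
    (wLP hk u hu1 (by omega) j hj2) (wLP_isPath hk u hu1 (by omega) j hj2)
  rw [hwL] at hy₀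
  have hy₀x : y₀ ≠ x₀ := by
    intro h
    rw [h, List.count_cons_self, List.count_cons_of_ne (Ne.symm hx₀d), hx₀P] at hy₀
    omega
  have hy₀d : y₀ ≠ d := by
    intro h
    rw [h, List.count_cons_of_ne hx₀d, List.count_cons_self] at hy₀
    omega
  have hy₀P : P.count y₀ = 1 := by
    rwa [List.count_cons_of_ne (Ne.symm hy₀x), List.count_cons_of_ne (Ne.symm hy₀d)] at hy₀
  exact ⟨x₀, y₀, Ne.symm hy₀x, hx₀d, hy₀d, hx₀P, hy₀P⟩

lemma lower_bound (hk : 2 ≤ k) : ¬ ∃ c : Sym2 (Fin (k + 2 ^ (k - 2))) → ℕ,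
    (∀ e ∈ (Rtree k).edgeSet, c e < k - 1) ∧ IsCFCColoring (Rtree k) c := by
  rintro ⟨c, hbd, hcfc⟩
  have hN := Npos (k := k)
  have hd : c s(vtx k 0, vtx k (k-1)) < k - 1 :=
    hbd _ ((SimpleGraph.mem_edgeSet _).mpr (adj_star hk (by omega) le_rfl))
  have := cfd_length_le (k-1) (Finset.range (k-1)) (pcolors k c)
    (c s(vtx k 0, vtx k (k-1))) (by simp) (Finset.mem_range.mpr hd)
    (fun x hx => Finset.mem_range.mpr (pcolors_mem hk hbd hx))
    (pcolors_intvUniq hk hcfc) (pcolors_prefTwo hk hbd hcfc)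
  rw [Finset.card_range] at this
  have hlen : (pcolors k c).length = 2 ^ (k - 2) := by simp [pcolors]
  rw [hlen] at this
  have h1 : k - 1 - 1 = k - 2 := by omega
  rw [h1] at this
  have : 0 < 2 ^ (k - 2) := pow_pos (by norm_num) _
  omega

end RtreeAux

/-- For `k ≥ 2`, `cfc(R_k) = k`. -/
theorem cfc_Rtree (k : ℕ) (hk : 2 ≤ k) : cfcNum (Rtree k) = k := by
  have hmem : k ∈ {m | ∃ c : Sym2 (Fin (k + 2 ^ (k - 2))) → ℕ,
      (∀ e ∈ (Rtree k).edgeSet, c e < m) ∧ IsCFCColoring (Rtree k) c} :=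
    ⟨RtreeAux.rcol k, RtreeAux.rcol_lt hk, RtreeAux.rtree_cfc hk⟩
  refine le_antisymm (Nat.sInf_le hmem) ?_
  refine le_csInf ⟨k, hmem⟩ ?_
  intro m hm
  by_contra h
  push_neg at h
  obtain ⟨c, hbd, hcfc⟩ := hm
  exact RtreeAux.lower_bound hk
    ⟨c, fun e he => lt_of_lt_of_le (hbd e he) (by omega), hcfc⟩
end
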